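/- Let G be a graph on N = 2n vertices with n odd, with an involution σ (a graph automorphism with σ² = id) having no fixed vertices (σ(v) ≠ v for all v) and no fixed edges (no edge of the form {v, σv}), and let Q : V(G) → ℝ be a potential symmetric across σ (Q(v) = Q(σv) for all v). Let A be the adjacency matrix of G plus the diagonal matrix diag(Q). If every eigenvector φ of A satisfies φ(x) ≠ 0 and φ(σx) ≠ 0, then there is no pretty good state transfer between x and σx. -/

import Mathlib

/-!
Every eigenvector is nonzero at `x`, so the eigenspaces of `A` are lines and each vector `φₖ` of
an orthonormal eigenbasis satisfies `φₖ ∘ σ = εₖ φₖ` with `εₖ = ±1`. Computing the traces of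
`P_σ` and `P_σ A` in this basis gives `∑ εₖ = #(fixed points of σ) = 0` and
`∑ εₖ λₖ = ∑ᵥ A (σ v) v = 0`; hence exactly `n` signs are `-1`, and `∏ εₖ = -1` as `n` is odd.

Now `U(t)_{x,σx} = ∑ₖ φₖ(x)² εₖ ζₖ` with `ζₖ = exp(i t λₖ)`, a convex combination of points of
the unit circle, and the phases satisfy `∏ ζₖ ^ εₖ = exp(i t ∑ εₖ λₖ) = 1`. On the compact set of
such phase vectors the modulus of this combination attains a maximum, which is `< 1`: equality
would force `εₖ ζₖ = γ` for all `k` (strict convexity of the disc), and then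
`∏ ζₖ ^ εₖ = (∏ εₖ) γ ^ (∑ εₖ) = -1`. So `|U(t)_{x,σx}|` stays bounded away from `1`.
-/

open Matrix Polynomial

/-- The transition matrix `U(t) = exp(i t A)`. -/
noncomputable def transition {V : Type*} [Fintype V] [DecidableEq V]
    (A : Matrix V V ℝ) (t : ℝ) : Matrix V V ℂ :=
  NormedSpace.exp (((t : ℂ) * Complex.I) • A.map (fun a => (a : ℂ)))

/-- Pretty good state transfer from `x` to `y`. -/
def PGST {V : Type*} [Fintype V] [DecidableEq V] (A : Matrix V V ℝ) (x y : V) : Prop :=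
  ∀ ε : ℝ, 0 < ε → ∃ t : ℝ, 0 < t ∧ 1 - ε < ‖transition A t x y‖

theorem Finset.prod_zpow_eq_zpow_sum₀ {ι G₀ : Type*} [CommGroupWithZero G₀] {a : G₀} (ha : a ≠ 0)
    (s : Finset ι) (f : ι → ℤ) : ∏ i ∈ s, a ^ f i = a ^ ∑ i ∈ s, f i := by
  induction s using Finset.cons_induction with
  | empty => simp
  | cons i s hi ih => rw [prod_cons, sum_cons, ih, zpow_add₀ ha]

theorem Int.units_cast_zpow_self {R : Type*} [DivisionRing R] (e : ℤˣ) :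
    ((e : ℤ) : R) ^ (e : ℤ) = (e : ℤ) := by
  rcases Int.units_eq_one_or e with rfl | rfl <;> simp

theorem Int.prod_units_eq_neg_one_of_sum_eq_zero {ι : Type*} [Fintype ι] {n : ℕ} (hn : Odd n)
    (hcard : Fintype.card ι = 2 * n) {ε : ι → ℤˣ} (hε : ∑ k, (ε k : ℤ) = 0) :
    ∏ k, ε k = -1 := by
  classical
  have hε_eq : ∀ k, (ε k : ℤ) = 1 - 2 * if ε k = -1 then 1 else 0 := fun k => by
    rcases Int.units_eq_one_or (ε k) with h | h <;> simp [h]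
  have hS : (Finset.univ.filter fun k => ε k = -1).card = n := by
    simp_rw [hε_eq, Finset.sum_sub_distrib, ← Finset.mul_sum, Finset.sum_boole] at hε
    simp only [Finset.sum_const, Finset.card_univ, hcard, nsmul_eq_mul, mul_one] at hε
    omega
  calc ∏ k, ε k = ∏ k, if ε k = -1 then -1 else 1 :=
        Finset.prod_congr rfl fun k _ => by rcases Int.units_eq_one_or (ε k) with h | h <;> simp [h]
    _ = -1 := by
      rw [Finset.prod_ite, Finset.prod_const, Finset.prod_const_one, mul_one, hS, hn.neg_one_pow]

theorem Circle.exp_sum {ι : Type*} (s : Finset ι) (f : ι → ℝ) :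
    Circle.exp (∑ i ∈ s, f i) = ∏ i ∈ s, Circle.exp (f i) := by
  induction s using Finset.cons_induction with
  | empty => simp [Circle.exp_zero]
  | cons i s hi ih => rw [Finset.prod_cons, Finset.sum_cons, Circle.exp_add, ih]

theorem Circle.prod_exp_mul_zpow {ι : Type*} (s : Finset ι) (t : ℝ) (μ : ι → ℝ) (e : ι → ℤ) :
    ∏ i ∈ s, Circle.exp (t * μ i) ^ e i = Circle.exp (t * ∑ i ∈ s, e i * μ i) := by
  rw [Finset.mul_sum, Circle.exp_sum]
  exact Finset.prod_congr rfl fun i _ => by rw [← Circle.exp_intCast_mul]; ring_nf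

section

variable {ι : Type*} [Fintype ι] {r : ι → ℝ} {ε : ι → ℤˣ}

theorem norm_sum_lt_one_of_prod_zpow_eq_one (hr : ∀ k, 0 < r k) (hr1 : ∑ k, r k = 1)
    (hεsum : ∑ k, (ε k : ℤ) = 0) (hεprod : ∏ k, ε k = -1) {ζ : ι → Circle}
    (hζ : ∏ k, ζ k ^ (ε k : ℤ) = 1) :
    ‖∑ k, r k • (((ε k : ℤ) : ℂ) * ζ k)‖ < 1 := by
  by_contra! hge
  have hconst : ∀ j k, ((ε j : ℤ) : ℂ) * ζ j = ((ε k : ℤ) : ℂ) * ζ k := by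
    by_contra! hne
    obtain ⟨j, k, hjk⟩ := hne
    refine hge.not_gt (norm_sum_lt_of_strictConvexSpace (fun i _ => (hr i).le) hr1
      (Finset.mem_univ j) (Finset.mem_univ k) hjk (hr j).ne' (hr k).ne' fun i _ => ?_)
    rcases Int.units_eq_one_or (ε i) with h | h <;> simp [h, Circle.norm_coe]
  obtain ⟨k₀⟩ : Nonempty ι := by
    by_contra! hι
    simp at hεprod
  have hζγ : ∀ k, (ζ k : ℂ) = ((ε k : ℤ) : ℂ) * (((ε k₀ : ℤ) : ℂ) * ζ k₀) := fun k => by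
    rw [← hconst k k₀]
    rcases Int.units_eq_one_or (ε k) with h | h <;> simp [h]
  have hγ : ((ε k₀ : ℤ) : ℂ) * ζ k₀ ≠ 0 := by simp
  have hζprod : ∏ k, (ζ k : ℂ) ^ (ε k : ℤ) = 1 :=
    (map_prod Circle.coeHom _ _).symm.trans (congrArg Circle.coeHom hζ)
  generalize ((ε k₀ : ℤ) : ℂ) * ζ k₀ = γ at hζγ hγ
  simp_rw [hζγ, mul_zpow, Finset.prod_mul_distrib, Int.units_cast_zpow_self,
    Finset.prod_zpow_eq_zpow_sum₀ hγ, hεsum, zpow_zero, mul_one] at hζprod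
  have hεprod' : ∏ k, (ε k : ℤ) = -1 := by rw [← Units.coe_prod, hεprod]; rfl
  rw [← Int.cast_prod, hεprod'] at hζprod
  norm_num at hζprod

theorem exists_lt_one_norm_sum_le_of_prod_zpow_eq_one (hr : ∀ k, 0 < r k)
    (hr1 : ∑ k, r k = 1) (hεsum : ∑ k, (ε k : ℤ) = 0) (hεprod : ∏ k, ε k = -1) :
    ∃ c < 1, ∀ ζ : ι → Circle, ∏ k, ζ k ^ (ε k : ℤ) = 1 →
      ‖∑ k, r k • (((ε k : ℤ) : ℂ) * ζ k)‖ ≤ c := by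
  set K : Set (ι → Circle) := {ζ | ∏ k, ζ k ^ (ε k : ℤ) = 1}
  have hK : IsCompact K := (isClosed_eq (by fun_prop) continuous_const).isCompact
  obtain ⟨ζ₀, hζ₀, hmax⟩ := hK.exists_isMaxOn ⟨1, by simp [K]⟩ (f := fun ζ : ι → Circle =>
    ‖∑ k, r k • (((ε k : ℤ) : ℂ) * ζ k)‖) (by fun_prop)
  exact ⟨_, norm_sum_lt_one_of_prod_zpow_eq_one hr hr1 hεsum hεprod hζ₀, fun ζ hζ => hmax hζ⟩

end

theorem sq_eq_one_of_comp_equiv_eq_smul {V R : Type*} [Fintype V] [Field R] [LinearOrder R]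
    [IsStrictOrderedRing R]
    {σ : V ≃ V} {φ : V → R} (hφ : φ ≠ 0) {c : R} (hc : φ ∘ σ = c • φ) : c ^ 2 = 1 := by
  have hnorm : (φ ∘ σ) ⬝ᵥ (φ ∘ σ) = φ ⬝ᵥ φ := Equiv.sum_comp σ fun v => φ v * φ v
  rw [hc, smul_dotProduct, dotProduct_smul, smul_smul, smul_eq_mul] at hnorm
  have h0 : φ ⬝ᵥ φ ≠ 0 := dotProduct_self_eq_zero.not.mpr hφ
  linear_combination (mul_left_eq_self₀.mp hnorm).resolve_right h0

namespace Matrix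

variable {V R : Type*} [Fintype V]

theorem apply_smul_eq_apply_smul_of_mulVec_eq_smul [CommRing R] {A : Matrix V V R} {lam : R}
    {x : V} (hx : ∀ φ : V → R, φ ≠ 0 → A *ᵥ φ = lam • φ → φ x ≠ 0) {φ ψ : V → R}
    (hφ : A *ᵥ φ = lam • φ) (hψ : A *ᵥ ψ = lam • ψ) : ψ x • φ = φ x • ψ := by
  by_contra hne
  refine hx (ψ x • φ - φ x • ψ) (sub_ne_zero.mpr hne) ?_ (by simp [mul_comm])
  rw [mulVec_sub, mulVec_smul, mulVec_smul, hφ, hψ, smul_sub, smul_comm lam, smul_comm lam]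

theorem mulVec_comp_equiv [NonUnitalNonAssocSemiring R] {A : Matrix V V R} {σ : V ≃ V}
    (hσ : A.submatrix σ σ = A) (φ : V → R) : A *ᵥ (φ ∘ σ) = (A *ᵥ φ) ∘ σ := by
  conv_lhs => rw [← hσ, submatrix_mulVec_equiv]
  simp [Function.comp_def]

theorem exists_comp_equiv_eq_units_smul [Field R] [LinearOrder R] [IsStrictOrderedRing R]
    {A : Matrix V V R} {σ : V ≃ V} (hσ : A.submatrix σ σ = A) {lam : R} {x : V}
    (hx : ∀ φ : V → R, φ ≠ 0 → A *ᵥ φ = lam • φ → φ x ≠ 0) {φ : V → R} (hφ0 : φ ≠ 0)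
    (hφ : A *ᵥ φ = lam • φ) : ∃ e : ℤˣ, φ ∘ σ = ((e : ℤ) : R) • φ := by
  have hφσ : A *ᵥ (φ ∘ σ) = lam • (φ ∘ σ) := by
    rw [mulVec_comp_equiv hσ, hφ]; rfl
  have hprop := apply_smul_eq_apply_smul_of_mulVec_eq_smul hx hφ hφσ
  have hx0 : φ x ≠ 0 := hx φ hφ0 hφ
  have hc : φ ∘ σ = ((φ ∘ σ) x / φ x) • φ := by
    rw [div_eq_inv_mul, mul_smul, hprop, inv_smul_smul₀ hx0]
  rcases sq_eq_one_iff.mp (sq_eq_one_of_comp_equiv_eq_smul hφ0 hc) with h | h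
  · exact ⟨1, by rw [hc, h]; simp⟩
  · exact ⟨-1, by rw [hc, h]; simp⟩

end Matrix

namespace Matrix.IsHermitian

variable {V : Type*} [Fintype V] [DecidableEq V] {A : Matrix V V ℝ} (hA : A.IsHermitian)

theorem eigenvectorUnitary_mul_transpose :
    (hA.eigenvectorUnitary : Matrix V V ℝ) * (hA.eigenvectorUnitary : Matrix V V ℝ)ᵀ = 1 := by
  simpa [star_eq_conjTranspose] using mem_unitaryGroup_iff.mp hA.eigenvectorUnitary.2

theorem transpose_eigenvectorUnitary_mul :
    (hA.eigenvectorUnitary : Matrix V V ℝ)ᵀ * (hA.eigenvectorUnitary : Matrix V V ℝ) = 1 := by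
  simpa [star_eq_conjTranspose] using mem_unitaryGroup_iff'.mp hA.eigenvectorUnitary.2

theorem eq_eigenvectorUnitary_mul_diagonal_mul_transpose :
    A = (hA.eigenvectorUnitary : Matrix V V ℝ) * diagonal hA.eigenvalues *
      (hA.eigenvectorUnitary : Matrix V V ℝ)ᵀ := by
  simpa [star_eq_conjTranspose] using hA.spectral_theorem

theorem sum_eigenvectorBasis_mul_eigenvectorBasis (a b : V) :
    ∑ k, hA.eigenvectorBasis k a * hA.eigenvectorBasis k b = (1 : Matrix V V ℝ) a b := by
  simp [← hA.eigenvectorUnitary_mul_transpose, mul_apply]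

theorem sum_eigenvectorBasis_mul_self (k : V) :
    ∑ v, hA.eigenvectorBasis k v * hA.eigenvectorBasis k v = 1 := by
  simpa [mul_apply] using congrFun (congrFun hA.transpose_eigenvectorUnitary_mul k) k

theorem eigenvectorBasis_ne_zero (k : V) : ⇑(hA.eigenvectorBasis k) ≠ 0 := fun h => by
  simpa [h] using hA.sum_eigenvectorBasis_mul_self k

theorem sum_eigenvalues_mul_eigenvectorBasis (a b : V) :
    ∑ k, hA.eigenvalues k * (hA.eigenvectorBasis k a * hA.eigenvectorBasis k b) = A a b := by
  conv_rhs => rw [hA.eq_eigenvectorUnitary_mul_diagonal_mul_transpose]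
  simp only [mul_apply, diagonal_apply, mul_ite, mul_zero, Finset.sum_ite_eq', Finset.mem_univ,
    if_true, transpose_apply, eigenvectorUnitary_apply]
  exact Finset.sum_congr rfl fun k _ => by ring

theorem transition_eq (t : ℝ) :
    transition A t = Complex.ofRealHom.mapMatrix (hA.eigenvectorUnitary : Matrix V V ℝ) *
      diagonal (fun k => (Circle.exp (t * hA.eigenvalues k) : ℂ)) *
      (Complex.ofRealHom.mapMatrix (hA.eigenvectorUnitary : Matrix V V ℝ))ᵀ := by
  set U : Matrix V V ℂ := Complex.ofRealHom.mapMatrix (hA.eigenvectorUnitary : Matrix V V ℝ)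
  have hUUt : U * Uᵀ = 1 := by
    simp only [U, RingHom.mapMatrix_apply, ← transpose_map]
    rw [← RingHom.mapMatrix_apply, ← RingHom.mapMatrix_apply, ← map_mul,
      hA.eigenvectorUnitary_mul_transpose, map_one]
  have hU : IsUnit U := (isUnit_iff_isUnit_det U).mpr (isUnit_det_of_right_inverse hUUt)
  have hUinv : U⁻¹ = Uᵀ := inv_eq_right_inv hUUt
  have hAmap : A.map (↑) = U * diagonal (fun k => (hA.eigenvalues k : ℂ)) * U⁻¹ := by
    change Complex.ofRealHom.mapMatrix A = _
    conv_lhs => rw [hA.eq_eigenvectorUnitary_mul_diagonal_mul_transpose]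
    rw [hUinv]
    simp [U, transpose_map, diagonal_map]
  have hsmul : ((t : ℂ) * Complex.I) • (U * diagonal (fun k => (hA.eigenvalues k : ℂ)) * U⁻¹) =
      U * diagonal (fun k => (t * hA.eigenvalues k : ℝ) * Complex.I) * U⁻¹ := by
    rw [← Matrix.smul_mul, ← Matrix.mul_smul, ← diagonal_smul]
    congr 3
    funext k
    simp only [Pi.smul_apply, smul_eq_mul]
    push_cast
    ring
  have hexp : NormedSpace.exp (fun k => (t * hA.eigenvalues k : ℝ) * Complex.I) =
      fun k => (Circle.exp (t * hA.eigenvalues k) : ℂ) := by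
    funext k
    rw [Pi.exp_def, ← Complex.exp_eq_exp_ℂ, Circle.coe_exp]
  rw [transition, hAmap, hsmul, exp_conj _ _ hU, exp_diagonal, hexp, hUinv]

theorem transition_apply (t : ℝ) (a b : V) :
    transition A t a b = ∑ k, (hA.eigenvectorBasis k a * hA.eigenvectorBasis k b) •
      (Circle.exp (t * hA.eigenvalues k) : ℂ) := by
  simp only [hA.transition_eq, mul_apply, diagonal_apply, mul_ite, mul_zero,
    Finset.sum_ite_eq', Finset.mem_univ, if_true, transpose_apply, RingHom.mapMatrix_apply,
    map_apply, eigenvectorUnitary_apply, Complex.ofRealHom_eq_coe, Complex.real_smul]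
  push_cast
  exact Finset.sum_congr rfl fun k _ => by ring

-- Both sides are the trace of `P_σ W`, `W = ∑ₖ wₖ φₖ φₖᵀ`, computed in the eigenbasis and in the
-- standard basis.
theorem sum_mul_eq_sum_sum_of_comp_eq_smul {σ : V ≃ V} {ε : V → ℝ}
    (hε : ∀ k, ⇑(hA.eigenvectorBasis k) ∘ σ = ε k • ⇑(hA.eigenvectorBasis k)) (w : V → ℝ) :
    ∑ k, ε k * w k =
      ∑ v, ∑ k, w k * (hA.eigenvectorBasis k (σ v) * hA.eigenvectorBasis k v) := by
  rw [Finset.sum_comm]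
  refine Finset.sum_congr rfl fun k _ => ?_
  have hσ : ∀ v, hA.eigenvectorBasis k (σ v) = ε k * hA.eigenvectorBasis k v :=
    fun v => congrFun (hε k) v
  rw [← mul_one (ε k * w k), ← hA.sum_eigenvectorBasis_mul_self k, Finset.mul_sum]
  exact Finset.sum_congr rfl fun v _ => by rw [hσ]; ring

theorem sum_eq_sum_one_apply_of_comp_eq_smul {σ : V ≃ V} {ε : V → ℝ}
    (hε : ∀ k, ⇑(hA.eigenvectorBasis k) ∘ σ = ε k • ⇑(hA.eigenvectorBasis k)) :
    ∑ k, ε k = ∑ v, (1 : Matrix V V ℝ) (σ v) v := by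
  simpa [hA.sum_eigenvectorBasis_mul_eigenvectorBasis] using
    hA.sum_mul_eq_sum_sum_of_comp_eq_smul hε 1

theorem sum_mul_eigenvalues_eq_sum_apply_of_comp_eq_smul {σ : V ≃ V} {ε : V → ℝ}
    (hε : ∀ k, ⇑(hA.eigenvectorBasis k) ∘ σ = ε k • ⇑(hA.eigenvectorBasis k)) :
    ∑ k, ε k * hA.eigenvalues k = ∑ v, A (σ v) v := by
  simpa [hA.sum_eigenvalues_mul_eigenvectorBasis] using
    hA.sum_mul_eq_sum_sum_of_comp_eq_smul hε hA.eigenvalues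

theorem transition_apply_eq_sum_of_comp_eq_smul {σ : V ≃ V} {ε : V → ℝ}
    (hε : ∀ k, ⇑(hA.eigenvectorBasis k) ∘ σ = ε k • ⇑(hA.eigenvectorBasis k)) (t : ℝ) (x : V) :
    transition A t x (σ x) = ∑ k, (hA.eigenvectorBasis k x * hA.eigenvectorBasis k x) •
      ((ε k : ℂ) * Circle.exp (t * hA.eigenvalues k)) := by
  refine (hA.transition_apply t x (σ x)).trans (Finset.sum_congr rfl fun k _ => ?_)
  have hσx : hA.eigenvectorBasis k (σ x) = ε k * hA.eigenvectorBasis k x := congrFun (hε k) x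
  simp only [hσx, Complex.real_smul]
  push_cast
  ring

end Matrix.IsHermitian

theorem Matrix.IsHermitian.not_PGST_of_submatrix_eq_self {V : Type*} [Fintype V] [DecidableEq V]
    {A : Matrix V V ℝ} (hA : A.IsHermitian) {n : ℕ} (hodd : Odd n) (hcard : Fintype.card V = 2 * n)
    {σ : V ≃ V} (hσA : A.submatrix σ σ = A) (hfix : ∀ v, σ v ≠ v) (hσdiag : ∀ v, A (σ v) v = 0)
    {x : V} (heig : ∀ (lam : ℝ) (φ : V → ℝ), φ ≠ 0 → A *ᵥ φ = lam • φ → φ x ≠ 0) :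
    ¬ PGST A x (σ x) := by
  choose ε hε using fun k => exists_comp_equiv_eq_units_smul hσA (heig _)
    (hA.eigenvectorBasis_ne_zero k) (hA.mulVec_eigenvectorBasis k)
  have hsum : ∑ k, (ε k : ℤ) = 0 := by
    have := hA.sum_eq_sum_one_apply_of_comp_eq_smul hε
    simp only [one_apply, hfix, if_false, Finset.sum_const_zero] at this
    exact_mod_cast this
  have hsumμ : ∑ k, ((ε k : ℤ) : ℝ) * hA.eigenvalues k = 0 := by
    simp [hA.sum_mul_eigenvalues_eq_sum_apply_of_comp_eq_smul hε, hσdiag]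
  obtain ⟨c, hc1, hc⟩ := exists_lt_one_norm_sum_le_of_prod_zpow_eq_one
    (fun k => mul_self_pos.mpr (heig _ _ (hA.eigenvectorBasis_ne_zero k)
      (hA.mulVec_eigenvectorBasis k)))
    (by simpa using hA.sum_eigenvectorBasis_mul_eigenvectorBasis x x) hsum
    (Int.prod_units_eq_neg_one_of_sum_eq_zero hodd hcard hsum)
  intro hPGST
  obtain ⟨t, -, ht⟩ := hPGST (1 - c) (by linarith)
  rw [hA.transition_apply_eq_sum_of_comp_eq_smul hε] at ht
  simp only [Complex.ofReal_intCast] at ht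
  linarith [hc (fun k => Circle.exp (t * hA.eigenvalues k))
    (by rw [Circle.prod_exp_mul_zpow, hsumμ, mul_zero, Circle.exp_zero])]

theorem SimpleGraph.Iso.submatrix_adjMatrix_add_diagonal {V R : Type*} [Semiring R]
    {G : SimpleGraph V} [DecidableRel G.Adj] [DecidableEq V] (σ : G ≃g G) {Q : V → R}
    (hQ : ∀ v, Q (σ v) = Q v) :
    (G.adjMatrix R + diagonal Q).submatrix σ.toEquiv σ.toEquiv = G.adjMatrix R + diagonal Q := by
  ext u v
  simp [diagonal_apply, hQ, σ.map_adj_iff]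

theorem stmt_18_general {V : Type*} [Fintype V] [DecidableEq V] (n : ℕ) (hodd : Odd n)
    (hcard : Fintype.card V = 2 * n)
    (G : SimpleGraph V) [DecidableRel G.Adj]
    (σ : G ≃g G)
    (hfixv : ∀ v, σ v ≠ v) (hfixe : ∀ v, ¬ G.Adj v (σ v))
    (Q : V → ℝ) (hQ : ∀ v, Q (σ v) = Q v)
    (A : Matrix V V ℝ) (hAdef : A = G.adjMatrix ℝ + Matrix.diagonal Q)
    (x : V)
    (heig : ∀ (lam : ℝ) (φ : V → ℝ), φ ≠ 0 → A *ᵥ φ = lam • φ →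
      φ x ≠ 0 ∧ φ (σ x) ≠ 0) :
    ¬ PGST A x (σ x) := by
  subst hAdef
  have hA : (G.adjMatrix ℝ + diagonal Q).IsHermitian :=
    (isHermitian_iff_isSymm.mpr G.isSymm_adjMatrix).add (isHermitian_diagonal Q)
  have hσdiag : ∀ v, (G.adjMatrix ℝ + diagonal Q) (σ v) v = 0 := fun v => by
    have : ¬ G.Adj (σ v) v := fun h => hfixe v h.symm
    simp [diagonal_apply_ne _ (hfixv v), this]
  exact hA.not_PGST_of_submatrix_eq_self hodd hcard (σ.submatrix_adjMatrix_add_diagonal hQ) hfixv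
    hσdiag fun lam φ h0 h => (heig lam φ h0 h).1

theorem stmt_18 {V : Type*} [Fintype V] [DecidableEq V] (n : ℕ) (hodd : Odd n)
    (hcard : Fintype.card V = 2 * n)
    (G : SimpleGraph V) [DecidableRel G.Adj]
    (σ : G ≃g G) (hinv : ∀ v, σ (σ v) = v)
    (hfixv : ∀ v, σ v ≠ v) (hfixe : ∀ v, ¬ G.Adj v (σ v))
    (Q : V → ℝ) (hQ : ∀ v, Q (σ v) = Q v)
    (A : Matrix V V ℝ) (hAdef : A = G.adjMatrix ℝ + Matrix.diagonal Q)
    (x : V)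
    (heig : ∀ (lam : ℝ) (φ : V → ℝ), φ ≠ 0 → A *ᵥ φ = lam • φ →
      φ x ≠ 0 ∧ φ (σ x) ≠ 0) :
    ¬ PGST A x (σ x) :=
  stmt_18_general n hodd hcard G σ hfixv hfixe Q hQ A hAdef x heig
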